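/- arXiv:2411.04939 — 8 statements merged into one kernel-verified Lean document; each statement's English description precedes it below -/
import Mathlib

section
/- The Mills ratio of the standard normal distribution is strictly decreasing on ℝ: for all real numbers x < y, R(y) < R(x). -/
open MeasureTheory Real Set
open scoped ENNReal

/-- The Mills ratio of the standard normal distribution:
`R(x) = e^{x²/2} ∫_x^∞ e^{-t²/2} dt`. -/
noncomputable def millsRatio (x : ℝ) : ℝ :=
  Real.exp (x ^ 2 / 2) * ∫ t in Set.Ioi x, Real.exp (-t ^ 2 / 2)

lemma millsRatio_integrand_eq (x s : ℝ) :
    Real.exp (x ^ 2 / 2) * Real.exp (-(s + x) ^ 2 / 2) = Real.exp (-s ^ 2 / 2 - s * x) := by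
  rw [← Real.exp_add]; ring_nf

lemma millsRatio_integrable (x : ℝ) :
    Integrable (fun s : ℝ => Real.exp (-s ^ 2 / 2 - s * x)) := by
  have h : Integrable (fun s : ℝ => Real.exp (-(1/2 : ℝ) * s ^ 2)) :=
    integrable_exp_neg_mul_sq (by norm_num)
  have h2 := (h.comp_add_right x).const_mul (Real.exp (x ^ 2 / 2))
  refine h2.congr (Filter.Eventually.of_forall fun s => ?_)
  show Real.exp (x ^ 2 / 2) * Real.exp (-(1/2 : ℝ) * (s + x) ^ 2) = _
  rw [show -(1/2 : ℝ) * (s + x) ^ 2 = -(s + x) ^ 2 / 2 by ring]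
  exact millsRatio_integrand_eq x s

lemma millsRatio_eq (x : ℝ) :
    millsRatio x = ∫ s in Set.Ioi (0 : ℝ), Real.exp (-s ^ 2 / 2 - s * x) := by
  unfold millsRatio
  rw [← MeasureTheory.integral_const_mul]
  rw [← integral_indicator measurableSet_Ioi, ← integral_indicator measurableSet_Ioi]
  rw [← MeasureTheory.integral_add_right_eq_self
    (fun t => (Set.Ioi x).indicator (fun t => Real.exp (x ^ 2 / 2) * Real.exp (-t ^ 2 / 2)) t) x]
  congr 1
  ext s
  by_cases hs : 0 < s
  · simp only [Set.indicator, Set.mem_Ioi, if_pos hs, if_pos (by linarith : x < s + x)]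
    exact millsRatio_integrand_eq x s
  · simp only [Set.indicator, Set.mem_Ioi, if_neg hs,
      if_neg (by intro h; exact hs (by linarith) : ¬ x < s + x)]

/-- The Mills ratio is strictly decreasing on `ℝ`: for all `x < y`, `R(y) < R(x)`. -/
theorem millsRatio_strictAnti : ∀ x y : ℝ, x < y → millsRatio y < millsRatio x := by
  intro x y hxy
  rw [millsRatio_eq, millsRatio_eq, ← sub_pos, ←
    MeasureTheory.integral_sub ((millsRatio_integrable x).integrableOn)
      ((millsRatio_integrable y).integrableOn)]
  set f : ℝ → ℝ := fun s => Real.exp (-s ^ 2 / 2 - s * x) - Real.exp (-s ^ 2 / 2 - s * y) with hf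
  have hpos : ∀ s ∈ Set.Ioi (0 : ℝ), 0 < f s := by
    intro s hs
    have : -s ^ 2 / 2 - s * y < -s ^ 2 / 2 - s * x := by nlinarith [mem_Ioi.mp hs]
    simpa [hf] using Real.exp_lt_exp.mpr this
  rw [setIntegral_pos_iff_support_of_nonneg_ae]
  · have hsub : Set.Ioi (0:ℝ) ⊆ Function.support f ∩ Set.Ioi 0 :=
      fun s hs => ⟨ne_of_gt (hpos s hs), hs⟩
    calc (0:ℝ≥0∞) < volume (Set.Ioi (0:ℝ)) := by simp
      _ ≤ _ := measure_mono hsub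
  · filter_upwards [ae_restrict_mem measurableSet_Ioi] with s hs
    exact (hpos s hs).le
  · exact ((millsRatio_integrable x).sub (millsRatio_integrable y)).integrableOn
end

section
/- The Mills ratio of the standard normal distribution is log-convex: the function x ↦ log R(x) is convex on ℝ. -/
open MeasureTheory Real Set

section HolderExp

variable {α : Type*} [MeasurableSpace α] {μ : Measure α}

lemma memLp_exp_mul_of_integrable_exp {u : α → ℝ} (hu : Integrable (fun s ↦ exp (u s)) μ)
    {a : ℝ} (ha : 0 < a) :
    MemLp (fun s ↦ exp (a * u s)) (ENNReal.ofReal (1 / a)) μ := by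
  have hp₀ : ENNReal.ofReal (1 / a) ≠ 0 := by simpa using ha
  rw [← memLp_norm_rpow_iff _ hp₀ ENNReal.ofReal_ne_top,
    ENNReal.toReal_ofReal (by positivity), ENNReal.div_self hp₀ ENNReal.ofReal_ne_top,
    memLp_one_iff_integrable]
  · refine hu.congr (ae_of_all _ fun s ↦ ?_)
    dsimp only
    rw [norm_of_nonneg (exp_pos _).le, ← exp_mul]
    field_simp
  · simp_rw [mul_comm a, exp_mul]
    exact (hu.aemeasurable.pow_const a).aestronglyMeasurable

theorem integral_exp_mul_add_mul_le {u v : α → ℝ} (hu : Integrable (fun s ↦ exp (u s)) μ)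
    (hv : Integrable (fun s ↦ exp (v s)) μ) {a b : ℝ} (ha : 0 < a) (hb : 0 < b)
    (hab : a + b = 1) :
    ∫ s, exp (a * u s + b * v s) ∂μ ≤ (∫ s, exp (u s) ∂μ) ^ a * (∫ s, exp (v s) ∂μ) ^ b := by
  have holder := integral_mul_le_Lp_mul_Lq_of_nonneg (holderConjugate_one_div ha hb hab)
    (ae_of_all μ fun s ↦ (exp_pos (a * u s)).le) (ae_of_all μ fun s ↦ (exp_pos (b * v s)).le)
    (memLp_exp_mul_of_integrable_exp hu ha) (memLp_exp_mul_of_integrable_exp hv hb)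
  have exp_mul_rpow_one_div {c : ℝ} (hc : 0 < c) (w : ℝ) : exp (c * w) ^ (1 / c) = exp w := by
    rw [← exp_mul]; field_simp
  simpa only [exp_add, exp_mul_rpow_one_div ha, exp_mul_rpow_one_div hb, one_div_one_div]
    using holder

theorem convexOn_log_integral_exp_mul_add [NeZero μ] {g h : α → ℝ} {S : Set ℝ}
    (hS : Convex ℝ S) (hint : ∀ x ∈ S, Integrable (fun s ↦ exp (x * g s + h s)) μ) :
    ConvexOn ℝ S fun x ↦ log (∫ s, exp (x * g s + h s) ∂μ) := by
  refine convexOn_iff_forall_pos.mpr ⟨hS, fun x hx y hy a b ha hb hab ↦ ?_⟩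
  have hcomb (s : α) : (a * x + b * y) * g s + h s
      = a * (x * g s + h s) + b * (y * g s + h s) := by
    linear_combination -(h s) * hab
  have hpos (z : ℝ) (hz : z ∈ S) := integral_exp_pos (hint z hz)
  simp only [smul_eq_mul, hcomb]
  rw [← log_rpow (hpos x hx), ← log_rpow (hpos y hy),
    ← log_mul (rpow_pos_of_pos (hpos x hx) a).ne' (rpow_pos_of_pos (hpos y hy) b).ne']
  refine log_le_log ?_ (integral_exp_mul_add_mul_le (hint x hx) (hint y hy) ha hb hab)
  simpa only [smul_eq_mul, hcomb] using hpos _ (hS hx hy ha.le hb.le hab)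

end HolderExp

lemma integrableOn_Ioi_exp_mul_neg_add_neg_sq_div_two (x : ℝ) :
    IntegrableOn (fun s : ℝ ↦ exp (x * -s + -s ^ 2 / 2)) (Ioi 0) := by
  have hsq : (fun s : ℝ ↦ exp (x * -s + -s ^ 2 / 2))
      = fun s ↦ exp (x ^ 2 / 2) * exp (-2⁻¹ * (s + x) ^ 2) := by
    ext s; rw [← exp_add]; ring_nf
  rw [hsq]
  exact (((integrable_exp_neg_mul_sq (by norm_num)).comp_add_right x).const_mul _).integrableOn

lemma millsRatio_eq_integral (x : ℝ) :
    millsRatio x = ∫ s in Ioi 0, exp (x * -s + -s ^ 2 / 2) := by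
  have hshift := (measurePreserving_add_right volume x).setIntegral_preimage_emb
    (measurableEmbedding_addRight x) (fun t ↦ exp (-t ^ 2 / 2)) (Ioi x)
  rw [preimage_add_const_Ioi, sub_self] at hshift
  rw [millsRatio, ← hshift, ← integral_const_mul]
  refine setIntegral_congr_fun measurableSet_Ioi fun s _ ↦ ?_
  rw [← exp_add]; ring_nf

/-- The Mills ratio is log-convex: `x ↦ log R(x)` is convex on `ℝ`. -/
theorem millsRatio_logConvex :
    ConvexOn ℝ Set.univ fun x => Real.log (millsRatio x) := by
  have : NeZero (volume.restrict (Ioi (0 : ℝ))) := ⟨by simp⟩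
  simp only [millsRatio_eq_integral]
  exact convexOn_log_integral_exp_mul_add convex_univ
    fun x _ ↦ integrableOn_Ioi_exp_mul_neg_add_neg_sq_div_two x
end

section
/- For every integer p ≥ 1 and all real numbers x₁, …, x_p, the Mills ratio of the standard normal distribution satisfies R((1/p) ∑_{i=1}^p x_i)^p ≤ ∏_{i=1}^p R(x_i). -/
open MeasureTheory Real Set

namespace MillsAux

noncomputable def g (y : ℝ) (s : ℝ) : ℝ := Real.exp (-(s * y) - s ^ 2 / 2)

lemma g_pos (y s : ℝ) : 0 < g y s := Real.exp_pos _

lemma g_integrable (y : ℝ) : Integrable (g y) (volume.restrict (Ioi 0)) := by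
  have h : Integrable (fun s : ℝ => Real.exp (-(1/2 : ℝ) * (s + y) ^ 2) * Real.exp (y ^ 2 / 2)) :=
    ((integrable_exp_neg_mul_sq (by norm_num : (0:ℝ) < 1/2)).comp_add_right y).mul_const _
  have h2 : (fun s : ℝ => Real.exp (-(1/2 : ℝ) * (s + y) ^ 2) * Real.exp (y ^ 2 / 2)) = g y := by
    funext s
    rw [← Real.exp_add]
    unfold g
    ring_nf
  rw [h2] at h
  exact h.restrict

lemma millsRatio_eq (y : ℝ) : millsRatio y = ∫ s in Ioi (0:ℝ), g y s := by
  have mp : MeasurePreserving (fun s : ℝ => s + y) volume volume :=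
    measurePreserving_add_right volume y
  have emb : MeasurableEmbedding (fun s : ℝ => s + y) :=
    (Homeomorph.addRight y).measurableEmbedding
  have key := mp.setIntegral_preimage_emb emb
    (fun t : ℝ => Real.exp (-t ^ 2 / 2)) (Ioi y)
  have hpre : (fun s : ℝ => s + y) ⁻¹' Ioi y = Ioi 0 := by
    ext s; simp
  rw [hpre] at key
  unfold millsRatio
  rw [← key, ← integral_const_mul]
  congr 1
  funext s
  rw [← Real.exp_add]
  unfold g
  ring_nf

lemma millsRatio_nonneg (y : ℝ) : 0 ≤ millsRatio y := by
  rw [millsRatio_eq]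
  exact integral_nonneg fun s => (g_pos y s).le

lemma ofReal_millsRatio (y : ℝ) :
    ENNReal.ofReal (millsRatio y) = ∫⁻ s in Ioi (0:ℝ), ENNReal.ofReal (g y s) := by
  rw [millsRatio_eq]
  exact ofReal_integral_eq_lintegral_ofReal (g_integrable y)
    (Filter.Eventually.of_forall fun s => (g_pos y s).le)

end MillsAux

/-- For every `p ≥ 1` and reals `x₁, …, x_p`,
`R((1/p) ∑ i, x i) ^ p ≤ ∏ i, R(x i)`. -/
theorem millsRatio_pow_avg_le_prod (p : ℕ) (hp : 1 ≤ p) (x : Fin p → ℝ) :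
    millsRatio ((1 / (p : ℝ)) * ∑ i, x i) ^ p ≤ ∏ i, millsRatio (x i) := by
  open MillsAux in
  have hp0 : (p : ℝ) ≠ 0 := Nat.cast_ne_zero.mpr (by omega)
  set y : ℝ := (1 / (p : ℝ)) * ∑ i, x i with hy
  -- pointwise Hölder decomposition
  have hpt : ∀ s : ℝ, ENNReal.ofReal (g y s)
      = ∏ i, (ENNReal.ofReal (g (x i) s)) ^ (1 / (p : ℝ)) := by
    intro s
    have h1 : g y s = ∏ i, (g (x i) s) ^ (1 / (p : ℝ)) := by
      unfold g
      have : ∀ i : Fin p, Real.exp (-(s * x i) - s ^ 2 / 2) ^ (1 / (p : ℝ))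
          = Real.exp ((-(s * x i) - s ^ 2 / 2) * (1 / (p : ℝ))) := fun i =>
        (Real.exp_mul _ _).symm
      simp_rw [this, ← Real.exp_sum]
      congr 1
      rw [← Finset.sum_mul, Finset.sum_sub_distrib, Finset.sum_const,
        Finset.card_univ, Fintype.card_fin, nsmul_eq_mul, hy,
        show ∑ i, -(s * x i) = -(s * ∑ i, x i) by simp [Finset.mul_sum]]
      rw [mul_one_div, eq_div_iff hp0]
      ring_nf
      rw [mul_assoc s, mul_inv_cancel₀ hp0, mul_one]
    rw [h1, ENNReal.ofReal_prod_of_nonneg (fun i _ => (Real.rpow_nonneg (g_pos _ _).le _))]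
    exact Finset.prod_congr rfl fun i _ => (ENNReal.ofReal_rpow_of_pos (g_pos _ _)).symm
  -- Hölder inequality for lintegrals
  have hmeas : ∀ i : Fin p, AEMeasurable (fun s => ENNReal.ofReal (g (x i) s))
      (volume.restrict (Ioi (0:ℝ))) :=
    fun i => (g_integrable (x i)).aemeasurable.ennreal_ofReal
  have hsum : ∑ _i : Fin p, (1 / (p : ℝ)) = 1 := by
    rw [Finset.sum_const, Finset.card_univ, Fintype.card_fin, nsmul_eq_mul]
    field_simp
  have holder := ENNReal.lintegral_prod_norm_pow_le (μ := volume.restrict (Ioi (0:ℝ)))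
    Finset.univ (fun i hi => hmeas i) hsum (fun i _ => by positivity)
  have key : ENNReal.ofReal (millsRatio y)
      ≤ ∏ i, (ENNReal.ofReal (millsRatio (x i))) ^ (1 / (p : ℝ)) := by
    rw [MillsAux.ofReal_millsRatio]
    calc ∫⁻ s in Ioi (0:ℝ), ENNReal.ofReal (g y s)
        = ∫⁻ s in Ioi (0:ℝ), ∏ i, (ENNReal.ofReal (g (x i) s)) ^ (1 / (p : ℝ)) := by
          simp_rw [hpt]
      _ ≤ ∏ i, (∫⁻ s in Ioi (0:ℝ), ENNReal.ofReal (g (x i) s)) ^ (1 / (p : ℝ)) := holder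
      _ = ∏ i, (ENNReal.ofReal (millsRatio (x i))) ^ (1 / (p : ℝ)) := by
          simp_rw [MillsAux.ofReal_millsRatio]
  -- raise both sides to the p-th power
  have key2 : (ENNReal.ofReal (millsRatio y)) ^ (p : ℝ)
      ≤ ∏ i, ENNReal.ofReal (millsRatio (x i)) := by
    calc (ENNReal.ofReal (millsRatio y)) ^ (p : ℝ)
        ≤ (∏ i, (ENNReal.ofReal (millsRatio (x i))) ^ (1 / (p : ℝ))) ^ (p : ℝ) :=
          ENNReal.rpow_le_rpow key (by positivity)
      _ = ∏ i, ENNReal.ofReal (millsRatio (x i)) := by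
          rw [← ENNReal.prod_rpow_of_nonneg (by positivity : (0:ℝ) ≤ (p:ℝ))]
          refine Finset.prod_congr rfl fun i _ => ?_
          rw [← ENNReal.rpow_mul, one_div, inv_mul_cancel₀ hp0, ENNReal.rpow_one]
  -- back to the reals
  rw [← ENNReal.ofReal_le_ofReal_iff
    (Finset.prod_nonneg fun i _ => MillsAux.millsRatio_nonneg _)]
  rw [ENNReal.ofReal_pow (MillsAux.millsRatio_nonneg _),
    ENNReal.ofReal_prod_of_nonneg (fun i _ => MillsAux.millsRatio_nonneg _)]
  rw [← ENNReal.rpow_natCast]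
  exact key2
end

section
/- Let Σ be a d×d positive definite real matrix and let V be a d×d diagonal positive definite matrix such that V − Σ⁻¹ is positive semi-definite. Then for every vector x ∈ ℝ^d, the Gaussian orthant probability satisfies (2π)^{-d/2} det(Σ)^{-1/2} ∫_{u ∈ ∏_{c=1}^d [x_c, ∞)} exp(−½ uᵀΣ⁻¹u) du ≥ (2π)^{-d/2} det(VΣ)^{-1/2} exp(−½ xᵀΣ⁻¹x) ∏_{c=1}^d R((V^{-1/2}Σ⁻¹x)_c), where R is the Mills ratio of the standard normal distribution. -/
/-! Substitute `u = x + w` with `w ≥ 0`. The cross term `2 (Σ⁻¹x)ᵀw` of the quadratic form is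
linear in `w`, and `V - Σ⁻¹ ⪰ 0` bounds `wᵀΣ⁻¹w` by `∑ v_c w_c²`, so on the orthant the Gaussian
density dominates `exp(-½ xᵀΣ⁻¹x)` times the product of the one-dimensional functions
`exp(-a_c t - v_c t²/2)`, where `a = Σ⁻¹x`. Completing the square, each of these integrates over
`[0, ∞)` to `v_c^{-1/2} R(v_c^{-1/2} a_c)`, and the factors `v_c^{-1/2}` turn `det Σ^{-1/2}` into
`det(VΣ)^{-1/2}`. -/

open Matrix

open MeasureTheory Set

lemma exp_neg_mul_sub_mul_sq_div_two_eq (a : ℝ) {v : ℝ} (hv : 0 < v) (t : ℝ) :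
    Real.exp (-(a * t) - v * t ^ 2 / 2) =
      Real.exp (((√v)⁻¹ * a) ^ 2 / 2) * Real.exp (-(√v * t + (√v)⁻¹ * a) ^ 2 / 2) := by
  have hs : √v ≠ 0 := (Real.sqrt_pos.2 hv).ne'
  rw [← Real.exp_add]
  congr 1
  field_simp
  rw [Real.sq_sqrt hv.le]
  ring

lemma integrable_exp_neg_mul_sub_mul_sq_div_two (a : ℝ) {v : ℝ} (hv : 0 < v) :
    Integrable fun t : ℝ => Real.exp (-(a * t) - v * t ^ 2 / 2) := by
  simp_rw [exp_neg_mul_sub_mul_sq_div_two_eq a hv]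
  refine Integrable.const_mul ?_ _
  have hgauss : Integrable fun y : ℝ => Real.exp (-y ^ 2 / 2) := by
    simpa [neg_div, div_eq_inv_mul] using integrable_exp_neg_mul_sq (b := 1 / 2) (by norm_num)
  exact (hgauss.comp_add_right _).comp_mul_left' (Real.sqrt_pos.2 hv).ne'

lemma integral_Ioi_exp_neg_mul_sub_mul_sq_div_two (a : ℝ) {v : ℝ} (hv : 0 < v) :
    ∫ t in Ioi 0, Real.exp (-(a * t) - v * t ^ 2 / 2) =
      (√v)⁻¹ * millsRatio ((√v)⁻¹ * a) := by
  set b := (√v)⁻¹ * a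
  have shift : ∫ t in Ioi 0, Real.exp (-(t + b) ^ 2 / 2) = ∫ t in Ioi b, Real.exp (-t ^ 2 / 2) := by
    conv_rhs => rw [← (measurePreserving_add_left volume b).setIntegral_preimage_emb
      (measurableEmbedding_addLeft b), preimage_const_add_Ioi, sub_self]
    simp_rw [add_comm b]
  simp_rw [exp_neg_mul_sub_mul_sq_div_two_eq a hv, integral_const_mul]
  rw [integral_comp_mul_left_Ioi (fun t => Real.exp (-(t + b) ^ 2 / 2)) 0 (Real.sqrt_pos.2 hv),
    mul_zero, shift, smul_eq_mul, millsRatio]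
  ring

section

variable {ι : Type*} [Fintype ι]

lemma setIntegral_Ici_prod_eq_prod (f : ι → ℝ → ℝ) (x : ι → ℝ) :
    ∫ w in Ici x, ∏ i, f i (w i) = ∏ i, ∫ t in Ici (x i), f i t := by
  rw [← pi_univ_Ici, volume_pi, Measure.restrict_pi_pi, integral_fintype_prod_eq_prod]

lemma integrableOn_Ici_prod {f : ι → ℝ → ℝ} {x : ι → ℝ}
    (hf : ∀ i, IntegrableOn (f i) (Ici (x i))) :
    IntegrableOn (fun w => ∏ i, f i (w i)) (Ici x) := by
  rw [IntegrableOn, ← pi_univ_Ici, volume_pi, Measure.restrict_pi_pi]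
  exact Integrable.fintype_prod hf

variable [DecidableEq ι]

lemma integrable_exp_neg_half_sum_sq_mulVec {B : Matrix ι ι ℝ} (hB : B.det ≠ 0) :
    Integrable fun u : ι → ℝ => Real.exp (-(1 / 2) * ∑ i, (B *ᵥ u) i ^ 2) := by
  have hstd : Integrable (fun y : ι → ℝ => ∏ i, Real.exp (-(1 / 2) * y i ^ 2))
      (Measure.map (toLin' B) volume) := by
    rw [Real.map_matrix_volume_pi_eq_smul_volume_pi hB]
    exact (Integrable.fintype_prod fun _ => integrable_exp_neg_mul_sq (by norm_num)).smul_measure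
      ENNReal.ofReal_ne_top
  have hmeas : Measurable (toLin' B) := (LinearMap.continuous_on_pi _).measurable
  refine ((integrable_map_measure hstd.aestronglyMeasurable hmeas.aemeasurable).1 hstd).congr
    (.of_forall fun u => ?_)
  simp only [Function.comp_apply, toLin'_apply, Finset.mul_sum, Real.exp_sum]

open scoped MatrixOrder in
lemma Matrix.PosDef.integrable_exp_neg_half_dotProduct_mulVec {A : Matrix ι ι ℝ}
    (hA : A.PosDef) :
    Integrable fun u : ι → ℝ => Real.exp (-(1 / 2) * (u ⬝ᵥ A *ᵥ u)) := by
  set B := CFC.sqrt A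
  have hBB : B * B = A := CFC.sqrt_mul_sqrt_self A hA.posSemidef.nonneg
  have hBT : Bᵀ = B := by
    rw [← conjTranspose_eq_transpose_of_trivial]
    exact (CFC.sqrt_nonneg A).posSemidef.1
  have hB : B.det ≠ 0 := fun h => hA.det_pos.ne' (by rw [← hBB, det_mul, h, zero_mul])
  have hquad : ∀ u : ι → ℝ, u ⬝ᵥ A *ᵥ u = ∑ i, (B *ᵥ u) i ^ 2 := by
    intro u
    rw [← hBB, ← mulVec_mulVec, dotProduct_mulVec, ← mulVec_transpose, hBT]
    simp [dotProduct, sq]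
  simpa only [hquad] using integrable_exp_neg_half_sum_sq_mulVec hB

lemma dotProduct_mulVec_add_le {A : Matrix ι ι ℝ} (hA : A.IsSymm) {v : ι → ℝ}
    (hvA : (diagonal v - A).PosSemidef) (x w : ι → ℝ) :
    (x + w) ⬝ᵥ A *ᵥ (x + w) ≤ x ⬝ᵥ A *ᵥ x + ∑ i, (2 * (A *ᵥ x) i * w i + v i * w i ^ 2) := by
  have hcross : w ⬝ᵥ A *ᵥ x = x ⬝ᵥ A *ᵥ w := by
    rw [dotProduct_comm, dotProduct_mulVec, ← mulVec_transpose, hA.eq]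
  have hlin : x ⬝ᵥ A *ᵥ w = ∑ i, (A *ᵥ x) i * w i := by
    rw [dotProduct_mulVec, ← mulVec_transpose, hA.eq, dotProduct]
  have hdiag : w ⬝ᵥ A *ᵥ w ≤ ∑ i, v i * w i ^ 2 := by
    have h := hvA.dotProduct_mulVec_nonneg w
    rw [star_trivial, sub_mulVec, dotProduct_sub, sub_nonneg] at h
    simpa [dotProduct, mulVec_diagonal, sq, mul_left_comm] using h
  rw [mulVec_add, dotProduct_add, add_dotProduct, add_dotProduct, hcross, Finset.sum_add_distrib,
    Finset.sum_congr rfl fun i _ => mul_assoc 2 _ _, ← Finset.mul_sum, ← hlin]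
  linarith

lemma exp_mul_prod_millsRatio_le_setIntegral_Ici {A : Matrix ι ι ℝ} (hA : A.PosDef)
    {v : ι → ℝ} (hv : ∀ i, 0 < v i) (hvA : (diagonal v - A).PosSemidef) (x : ι → ℝ) :
    Real.exp (-(1 / 2) * (x ⬝ᵥ A *ᵥ x)) *
        ∏ i, (√(v i))⁻¹ * millsRatio ((√(v i))⁻¹ * (A *ᵥ x) i)
      ≤ ∫ u in Ici x, Real.exp (-(1 / 2) * (u ⬝ᵥ A *ᵥ u)) := by
  set a := A *ᵥ x
  set g : ι → ℝ → ℝ := fun i t => Real.exp (-(a i * t) - v i * t ^ 2 / 2)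
  have hsymm : A.IsSymm := by
    rw [IsSymm, ← conjTranspose_eq_transpose_of_trivial]
    exact hA.1
  have hpoint : ∀ w : ι → ℝ, Real.exp (-(1 / 2) * (x ⬝ᵥ A *ᵥ x)) * ∏ i, g i (w i)
      ≤ Real.exp (-(1 / 2) * ((x + w) ⬝ᵥ A *ᵥ (x + w))) := by
    intro w
    have hsum : ∑ i, (-(a i * w i) - v i * w i ^ 2 / 2) =
        -(1 / 2) * ∑ i, (2 * a i * w i + v i * w i ^ 2) := by
      rw [Finset.mul_sum]
      exact Finset.sum_congr rfl fun i _ => by ring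
    rw [← Real.exp_sum, ← Real.exp_add, Real.exp_le_exp, hsum]
    linarith [dotProduct_mulVec_add_le hsymm hvA x w]
  calc Real.exp (-(1 / 2) * (x ⬝ᵥ A *ᵥ x)) * ∏ i, (√(v i))⁻¹ * millsRatio ((√(v i))⁻¹ * a i)
      = Real.exp (-(1 / 2) * (x ⬝ᵥ A *ᵥ x)) * ∫ w in Ici (0 : ι → ℝ), ∏ i, g i (w i) := by
        simp_rw [setIntegral_Ici_prod_eq_prod, Pi.zero_apply, integral_Ici_eq_integral_Ioi, g,
          integral_Ioi_exp_neg_mul_sub_mul_sq_div_two _ (hv _)]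
    _ ≤ ∫ w in Ici (0 : ι → ℝ), Real.exp (-(1 / 2) * ((x + w) ⬝ᵥ A *ᵥ (x + w))) := by
        rw [← integral_const_mul]
        refine setIntegral_mono_on ?_ ?_ measurableSet_Ici fun w _ => hpoint w
        · exact (integrableOn_Ici_prod fun i =>
            (integrable_exp_neg_mul_sub_mul_sq_div_two _ (hv i)).integrableOn).const_mul _
        · exact (hA.integrable_exp_neg_half_dotProduct_mulVec.comp_add_left x).integrableOn
    _ = ∫ u in Ici x, Real.exp (-(1 / 2) * (u ⬝ᵥ A *ᵥ u)) := by
        conv_rhs => rw [← (measurePreserving_add_left volume x).setIntegral_preimage_emb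
          (measurableEmbedding_addLeft x), preimage_const_add_Ici, sub_self]

lemma det_diagonal_mul_rpow_neg_half {v : ι → ℝ} (hv : ∀ i, 0 ≤ v i) {S : Matrix ι ι ℝ}
    (hS : 0 ≤ S.det) :
    (diagonal v * S).det ^ (-(1 : ℝ) / 2) = (∏ i, (√(v i))⁻¹) * S.det ^ (-(1 : ℝ) / 2) := by
  rw [det_mul, det_diagonal, Real.mul_rpow (Finset.prod_nonneg fun i _ => hv i) hS,
    ← Real.finsetProd_rpow _ _ fun i _ => hv i]
  congr 1
  refine Finset.prod_congr rfl fun i _ => ?_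
  rw [neg_div, Real.rpow_neg (hv i), ← Real.sqrt_eq_rpow]

end

/-- Lower bound on the Gaussian orthant probability: for `Σ` positive definite,
`V` diagonal positive definite with `V - Σ⁻¹` positive semi-definite, and any `x ∈ ℝ^d`,
`(2π)^{-d/2} det(Σ)^{-1/2} ∫_{u ≥ x} exp(-½ uᵀΣ⁻¹u) du ≥
 (2π)^{-d/2} det(VΣ)^{-1/2} exp(-½ xᵀΣ⁻¹x) ∏_c R((V^{-1/2}Σ⁻¹x)_c)`. -/
theorem gaussian_orthant_lower_bound (d : ℕ)
    (S : Matrix (Fin d) (Fin d) ℝ) (hS : S.PosDef)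
    (v : Fin d → ℝ) (hv : ∀ i, 0 < v i)
    (hVS : (Matrix.diagonal v - S⁻¹).PosSemidef)
    (x : Fin d → ℝ) :
    (2 * Real.pi) ^ (-(d : ℝ) / 2) * S.det ^ (-(1 : ℝ) / 2) *
        ∫ u in {u : Fin d → ℝ | ∀ c, x c ≤ u c},
          Real.exp (-(1 / 2) * (u ⬝ᵥ S⁻¹.mulVec u))
      ≥ (2 * Real.pi) ^ (-(d : ℝ) / 2) * (Matrix.diagonal v * S).det ^ (-(1 : ℝ) / 2) *
          Real.exp (-(1 / 2) * (x ⬝ᵥ S⁻¹.mulVec x)) *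
          ∏ c, millsRatio
            (((Matrix.diagonal fun i => (Real.sqrt (v i))⁻¹).mulVec (S⁻¹.mulVec x)) c) := by
  have key := exp_mul_prod_millsRatio_le_setIntegral_Ici hS.inv hv hVS x
  rw [det_diagonal_mul_rpow_neg_half (fun i => (hv i).le) hS.det_pos.le, ge_iff_le]
  simp_rw [mulVec_diagonal]
  calc _ = ((2 * Real.pi) ^ (-(d : ℝ) / 2) * S.det ^ (-(1 : ℝ) / 2)) *
        (Real.exp (-(1 / 2) * (x ⬝ᵥ S⁻¹ *ᵥ x)) *
          ∏ c, (√(v c))⁻¹ * millsRatio ((√(v c))⁻¹ * (S⁻¹ *ᵥ x) c)) := by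
        rw [Finset.prod_mul_distrib]
        ring
    _ ≤ _ := mul_le_mul_of_nonneg_left key
        (mul_nonneg (by positivity) (Real.rpow_nonneg hS.det_pos.le _))
end

section
/- Let M be an n×n real positive semi-definite matrix, θ' ∈ ℝⁿ, and D ⊆ ℝⁿ a convex set such that sup_{λ ∈ D} (θ'−λ)ᵀM(θ'−λ) ≤ B for some B > 0. Then for every α with 0 < α ≤ 1/(2B), the function λ ↦ exp(−α (θ'−λ)ᵀM(θ'−λ)) is concave on D. -/
/-!
Factor `M = Cᵀ C`, so that the quadratic form is `N(λ)²` with `N(λ) = ‖C (θ' - λ)‖`, a convex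
function. The function in question is then `ψ ∘ N` with `ψ t = exp (-α t²)`, which is
nonincreasing for `t ≥ 0` and concave wherever `2 α t² ≤ 1`, since
`ψ'' t = 2 α (2 α t² - 1) exp (-α t²)`. The bound `N² ≤ B ≤ 1 / (2 α)` keeps `N` in that range,
and a concave nonincreasing function of a convex function is concave.
-/

open Matrix Set Real

theorem ConcaveOn.comp_convexOn_of_mapsTo {𝕜 E α β : Type*} [Semiring 𝕜] [PartialOrder 𝕜]
    [AddCommMonoid E] [AddCommMonoid α] [PartialOrder α] [AddCommMonoid β] [PartialOrder β]
    [SMul 𝕜 E] [SMul 𝕜 α] [SMul 𝕜 β] {s : Set E} {t : Set β} {f : E → β} {g : β → α}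
    (hg : ConcaveOn 𝕜 t g) (hf : ConvexOn 𝕜 s f) (hg' : AntitoneOn g t) (hst : MapsTo f s t) :
    ConcaveOn 𝕜 s (g ∘ f) :=
  ⟨hf.1, fun _ hx _ hy _ _ ha hb hab =>
    (hg.2 (hst hx) (hst hy) ha hb hab).trans <|
      hg' (hst <| hf.1 hx hy ha hb hab) (hg.1 (hst hx) (hst hy) ha hb hab) (hf.2 hx hy ha hb hab)⟩

theorem concaveOn_exp_neg_mul_sq {α r : ℝ} (hα : 0 ≤ α) (hr : 2 * α * r ^ 2 ≤ 1) :
    ConcaveOn ℝ (Icc (-r) r) fun t => exp (-α * t ^ 2) := by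
  have hf' (t : ℝ) :
      HasDerivAt (fun t => exp (-α * t ^ 2)) (exp (-α * t ^ 2) * (-2 * α * t)) t := by
    convert ((hasDerivAt_pow 2 t).const_mul (-α)).exp using 1
    ring
  have hf'' (t : ℝ) : HasDerivAt (fun t => exp (-α * t ^ 2) * (-2 * α * t))
      (exp (-α * t ^ 2) * (2 * α * (2 * α * t ^ 2 - 1))) t := by
    refine ((hf' t).fun_mul ((hasDerivAt_id t).const_mul (-2 * α))).congr_deriv ?_
    simp only [id]
    ring
  refine concaveOn_of_hasDerivWithinAt2_nonpos (convex_Icc _ _)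
    (fun t _ => (hf' t).continuousAt.continuousWithinAt) (fun t _ => (hf' t).hasDerivWithinAt)
    (fun t _ => (hf'' t).hasDerivWithinAt) fun t ht => ?_
  rw [interior_Icc] at ht
  have ht2 : t ^ 2 ≤ r ^ 2 := sq_le_sq' ht.1.le ht.2.le
  refine mul_nonpos_of_nonneg_of_nonpos (exp_pos _).le (mul_nonpos_of_nonneg_of_nonpos ?_ ?_)
  · positivity
  · nlinarith

theorem antitoneOn_exp_neg_mul_sq {α : ℝ} (hα : 0 ≤ α) :
    AntitoneOn (fun t => exp (-α * t ^ 2)) (Ici 0) := fun x hx y _ hxy => by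
  simp only [neg_mul, exp_le_exp, neg_le_neg_iff]
  gcongr

theorem Matrix.PosSemidef.exists_eq_transpose_mul_self {n : Type*} [Fintype n] [DecidableEq n]
    {M : Matrix n n ℝ} (hM : M.PosSemidef) : ∃ C : Matrix n n ℝ, M = Cᵀ * C := by
  open scoped MatrixOrder Matrix.Norms.L2Operator in
  obtain ⟨C, rfl⟩ := CStarAlgebra.nonneg_iff_eq_star_mul_self.mp hM.nonneg
  exact ⟨C, by simp [star_eq_conjTranspose]⟩

theorem Matrix.dotProduct_transpose_mul_self_mulVec {m n : Type*} [Fintype m] [Fintype n]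
    (C : Matrix m n ℝ) (v : n → ℝ) :
    v ⬝ᵥ (Cᵀ * C) *ᵥ v = ‖WithLp.toLp 2 (C *ᵥ v)‖ ^ 2 := by
  rw [EuclideanSpace.norm_sq_eq, ← mulVec_mulVec, dotProduct_mulVec, vecMul_transpose]
  simp [dotProduct, sq]

theorem Matrix.convexOn_norm_mulVec_sub {m n : Type*} [Fintype m] [Fintype n]
    (C : Matrix m n ℝ) (θ : n → ℝ) :
    ConvexOn ℝ univ fun l => ‖WithLp.toLp 2 (C *ᵥ (θ - l))‖ := by
  refine ⟨convex_univ, fun x _ y _ a b ha hb hab => ?_⟩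
  have hsplit : WithLp.toLp 2 (C *ᵥ (θ - (a • x + b • y))) =
      a • WithLp.toLp 2 (C *ᵥ (θ - x)) + b • WithLp.toLp 2 (C *ᵥ (θ - y)) := by
    rw [← WithLp.toLp_smul, ← WithLp.toLp_smul, ← WithLp.toLp_add, ← mulVec_smul,
      ← mulVec_smul, ← mulVec_add]
    congr 2
    calc θ - (a • x + b • y) = (a + b) • θ - (a • x + b • y) := by rw [hab, one_smul]
      _ = a • (θ - x) + b • (θ - y) := by module
  dsimp only
  rw [hsplit]
  refine (norm_add_le _ _).trans_eq ?_
  rw [norm_smul, norm_smul, norm_of_nonneg ha, norm_of_nonneg hb, smul_eq_mul, smul_eq_mul]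

/-- Exp-concavity of a positive semi-definite quadratic form on a bounded convex domain:
if `(θ'−λ)ᵀM(θ'−λ) ≤ B` on `D` and `0 < α ≤ 1/(2B)`, then
`λ ↦ exp(−α (θ'−λ)ᵀM(θ'−λ))` is concave on `D`. -/
theorem exp_neg_quadform_concaveOn (n : ℕ)
    (M : Matrix (Fin n) (Fin n) ℝ) (hM : M.PosSemidef)
    (θ' : Fin n → ℝ) (D : Set (Fin n → ℝ)) (hD : Convex ℝ D)
    (B : ℝ) (hB : 0 < B)
    (hbound : ∀ l ∈ D, (θ' - l) ⬝ᵥ M.mulVec (θ' - l) ≤ B)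
    (α : ℝ) (hα0 : 0 < α) (hα : α ≤ 1 / (2 * B)) :
    ConcaveOn ℝ D fun l => Real.exp (-α * ((θ' - l) ⬝ᵥ M.mulVec (θ' - l))) := by
  obtain ⟨C, rfl⟩ := hM.exists_eq_transpose_mul_self
  simp only [dotProduct_transpose_mul_self_mulVec] at hbound ⊢
  have hαB : 2 * α * (√B) ^ 2 ≤ 1 := by
    rw [sq_sqrt hB.le, mul_comm 2, mul_assoc, ← le_div_iff₀ (by positivity)]
    exact hα
  have hmaps : MapsTo (fun l => ‖WithLp.toLp 2 (C *ᵥ (θ' - l))‖) D (Icc 0 √B) :=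
    fun l hl => ⟨norm_nonneg _, le_sqrt_of_sq_le (hbound l hl)⟩
  have hψ : ConcaveOn ℝ (Icc 0 √B) fun t => exp (-α * t ^ 2) :=
    (concaveOn_exp_neg_mul_sq hα0.le hαB).subset
      (Icc_subset_Icc (neg_nonpos.2 (sqrt_nonneg B)) le_rfl) (convex_Icc _ _)
  exact hψ.comp_convexOn_of_mapsTo ((convexOn_norm_mulVec_sub C θ').subset (subset_univ D) hD)
    ((antitoneOn_exp_neg_mul_sq hα0.le).mono Icc_subset_Ici_self) hmaps
end

section
/- Let Z be a finite subset of ℝ^h of cardinality |Z|, let d ≥ 1, and let θ ∈ ℝ^{h×d}. Let p := |S*(θ)| be the cardinality of the Pareto set of θ. Then the alternative set alt(θ) := {λ ∈ ℝ^{h×d} : S*(λ) ≠ S*(θ)} can be written as the union of p(p−1) + (|Z|−p)·d^p convex subsets of ℝ^{h×d}, i.e. there exists a family of p(p−1) + (|Z|−p)·d^p convex sets whose union equals alt(θ). -/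
open Matrix

def ParetoDom {d : ℕ} (u v : Fin d → ℝ) : Prop :=
  (∀ c, u c ≤ v c) ∧ ∃ c, u c < v c

def paretoSet {h d : ℕ} (Z : Set (Fin h → ℝ)) (l : Matrix (Fin h) (Fin d) ℝ) :
    Set (Fin h → ℝ) :=
  {z ∈ Z | ¬ ∃ x ∈ Z, x ≠ z ∧ ParetoDom (lᵀ.mulVec z) (lᵀ.mulVec x)}

lemma paretoDom_trans {d : ℕ} {u v w : Fin d → ℝ}
    (h1 : ParetoDom u v) (h2 : ParetoDom v w) : ParetoDom u w := by
  obtain ⟨h1a, c1, h1c⟩ := h1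
  obtain ⟨h2a, c2, h2c⟩ := h2
  exact ⟨fun c => le_trans (h1a c) (h2a c), c1, lt_of_lt_of_le h1c (h2a c1)⟩

lemma paretoDom_irrefl {d : ℕ} (u : Fin d → ℝ) : ¬ ParetoDom u u := by
  rintro ⟨_, c, hc⟩; exact lt_irrefl _ hc

lemma paretoDom_ne {d : ℕ} {u v : Fin d → ℝ} (h : ParetoDom u v) : u ≠ v := by
  rintro rfl; exact paretoDom_irrefl _ h

lemma exists_maximal_aux {α : Type*} [DecidableEq α] (r : α → α → Prop)
    (htrans : ∀ {a b c}, r a b → r b c → r a c)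
    (hirr : ∀ a, ¬ r a a) :
    ∀ t : Finset α, ∀ z ∈ t, ∃ x ∈ t, (x = z ∨ r z x) ∧ ∀ y ∈ t, ¬ r x y := by
  intro t
  induction t using Finset.strongInduction with
  | _ t ih =>
    intro z hz
    by_cases hmax : ∀ y ∈ t, ¬ r z y
    · exact ⟨z, hz, Or.inl rfl, hmax⟩
    · push_neg at hmax
      obtain ⟨y, hy, hry⟩ := hmax
      have hyz : y ≠ z := by rintro rfl; exact hirr _ hry
      have hy' : y ∈ t.erase z := Finset.mem_erase.mpr ⟨hyz, hy⟩
      obtain ⟨x, hx, hx2, hx3⟩ := ih (t.erase z) (Finset.erase_ssubset hz) y hy'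
      refine ⟨x, Finset.mem_of_mem_erase hx, Or.inr ?_, ?_⟩
      · rcases hx2 with rfl | hrx
        · exact hry
        · exact htrans hry hrx
      · intro w hw hrw
        rcases eq_or_ne w z with rfl | hwz
        · have hzx : r w x := by
            rcases hx2 with rfl | hrx
            · exact hry
            · exact htrans hry hrx
          exact hirr x (htrans hrw hzx)
        · exact hx3 w (Finset.mem_erase.mpr ⟨hwz, hw⟩) hrw

lemma exists_maximal_dominator {h d : ℕ} (Z : Finset (Fin h → ℝ))
    (l : Matrix (Fin h) (Fin d) ℝ) {z : Fin h → ℝ} (hz : z ∈ Z)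
    (hz' : z ∉ paretoSet (↑Z) l) :
    ∃ x, x ∈ paretoSet (↑Z) l ∧ ParetoDom (lᵀ.mulVec z) (lᵀ.mulVec x) := by
  have hdom : ∃ x ∈ Z, ParetoDom (lᵀ.mulVec z) (lᵀ.mulVec x) := by
    simp only [paretoSet, Set.mem_setOf_eq, Finset.mem_coe, not_and, not_not] at hz'
    obtain ⟨x, hx, _, hdx⟩ := hz' hz
    exact ⟨x, hx, hdx⟩
  set r : (Fin h → ℝ) → (Fin h → ℝ) → Prop :=
    fun a b => ParetoDom (lᵀ.mulVec a) (lᵀ.mulVec b) with hr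
  obtain ⟨y, hy, hry⟩ := hdom
  classical
  obtain ⟨x, hx, hx2, hx3⟩ := exists_maximal_aux r
    (fun hab hbc => paretoDom_trans hab hbc)
    (fun a => paretoDom_irrefl _) Z y hy
  have hzx : r z x := by
    rcases hx2 with rfl | hrx
    · exact hry
    · exact paretoDom_trans hry hrx
  refine ⟨x, ⟨hx, ?_⟩, hzx⟩
  rintro ⟨w, hw, _, hdw⟩
  exact hx3 w hw hdw

lemma combo_mulVec {h d : ℕ} (a b : ℝ) (l₁ l₂ : Matrix (Fin h) (Fin d) ℝ)
    (z : Fin h → ℝ) :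
    ((a • l₁ + b • l₂)ᵀ).mulVec z = a • (l₁ᵀ.mulVec z) + b • (l₂ᵀ.mulVec z) := by
  simp [Matrix.transpose_add, Matrix.transpose_smul, Matrix.add_mulVec,
    Matrix.smul_mulVec]

lemma convex_domSet {h d : ℕ} (z x : Fin h → ℝ) :
    Convex ℝ {l : Matrix (Fin h) (Fin d) ℝ | ParetoDom (lᵀ.mulVec z) (lᵀ.mulVec x)} := by
  rintro l₁ ⟨h1a, c1, h1c⟩ l₂ ⟨h2a, c2, h2c⟩ a b ha hb hab
  have key : ∀ (w : Fin h → ℝ) (c : Fin d),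
      ((a • l₁ + b • l₂)ᵀ.mulVec w) c = a * (l₁ᵀ.mulVec w) c + b * (l₂ᵀ.mulVec w) c := by
    intro w c
    rw [combo_mulVec]
    simp
  constructor
  · intro c
    rw [key, key]
    have t1 := mul_le_mul_of_nonneg_left (h1a c) ha
    have t2 := mul_le_mul_of_nonneg_left (h2a c) hb
    linarith
  · rcases eq_or_lt_of_le ha with heq | hpos
    · refine ⟨c2, ?_⟩
      rw [key, key, ← heq]
      have hb1 : b = 1 := by linarith
      simpa [hb1] using h2c
    · refine ⟨c1, ?_⟩
      rw [key, key]
      have t1 := mul_lt_mul_of_pos_left h1c hpos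
      have t2 := mul_le_mul_of_nonneg_left (h2a c1) hb
      linarith

lemma convex_ESet {h d : ℕ} {ι' : Type*} (z : Fin h → ℝ) (g : ι' → (Fin h → ℝ))
    (f : ι' → Fin d) :
    Convex ℝ {l : Matrix (Fin h) (Fin d) ℝ |
      ∀ x : ι', (lᵀ.mulVec (g x)) (f x) < (lᵀ.mulVec z) (f x) ∨
        lᵀ.mulVec z = lᵀ.mulVec (g x)} := by
  intro l₁ h₁ l₂ h₂ a b ha hb hab
  intro x
  have key : ∀ w : Fin h → ℝ,
      ((a • l₁ + b • l₂)ᵀ.mulVec w) = a • (l₁ᵀ.mulVec w) + b • (l₂ᵀ.mulVec w) :=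
    combo_mulVec a b l₁ l₂
  have keyc : ∀ (w : Fin h → ℝ) (c : Fin d),
      ((a • l₁ + b • l₂)ᵀ.mulVec w) c = a * (l₁ᵀ.mulVec w) c + b * (l₂ᵀ.mulVec w) c := by
    intro w c; rw [key]; simp
  rcases h₁ x with h1 | h1 <;> rcases h₂ x with h2 | h2
  · left
    rw [keyc, keyc]
    rcases eq_or_lt_of_le ha with heq | hpos
    · have hb1 : b = 1 := by linarith
      rw [← heq]; simpa [hb1] using h2
    · have t1 := mul_lt_mul_of_pos_left h1 hpos
      have t2 := mul_le_mul_of_nonneg_left (le_of_lt h2) hb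
      linarith
  · rcases eq_or_lt_of_le ha with heq | hpos
    · right
      have hb1 : b = 1 := by linarith
      rw [key, key, ← heq, hb1, h2]
      simp
    · left
      rw [keyc, keyc]
      have e2 := congrFun h2 (f x)
      have t1 := mul_lt_mul_of_pos_left h1 hpos
      rw [← e2]
      linarith
  · rcases eq_or_lt_of_le hb with heq | hpos
    · right
      have ha1 : a = 1 := by linarith
      rw [key, key, ← heq, ha1, h1]
      simp
    · left
      rw [keyc, keyc]
      have e1 := congrFun h1 (f x)
      have t2 := mul_lt_mul_of_pos_left h2 hpos
      rw [← e1]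
      linarith
  · right
    rw [key, key, h1, h2]

/-- The alternative set `alt(θ) = {λ | S*(λ) ≠ S*(θ)}` is the union of
`p(p−1) + (|Z|−p)·d^p` convex sets, where `p = |S*(θ)|`. -/
theorem alt_union_convex (h d : ℕ) (hd : 1 ≤ d)
    (Z : Finset (Fin h → ℝ)) (θ : Matrix (Fin h) (Fin d) ℝ) :
    ∃ C : Fin ((paretoSet (↑Z) θ).ncard * ((paretoSet (↑Z) θ).ncard - 1)
          + (Z.card - (paretoSet (↑Z) θ).ncard) * d ^ (paretoSet (↑Z) θ).ncard)
        → Set (Matrix (Fin h) (Fin d) ℝ),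
      (∀ i, Convex ℝ (C i)) ∧
      (⋃ i, C i) = {l | paretoSet (↑Z) l ≠ paretoSet (↑Z) θ} := by
  classical
  set P : Set (Fin h → ℝ) := paretoSet (↑Z) θ with hP
  set Sfin : Finset (Fin h → ℝ) := Z.filter (fun z => z ∈ P) with hSfin
  have hPS : P = ↑Sfin := by
    ext z
    constructor
    · intro hz
      exact Finset.mem_coe.mpr (Finset.mem_filter.mpr ⟨Finset.mem_coe.mp hz.1, hz⟩)
    · intro hz
      exact (Finset.mem_filter.mp (Finset.mem_coe.mp hz)).2
  have hncard : P.ncard = Sfin.card := by rw [hPS]; exact Set.ncard_coe_finset _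
  have hsub : Sfin ⊆ Z := Finset.filter_subset _ _
  -- index type
  have hcard : Fintype.card ((↥Sfin.offDiag) ⊕ (↥(Z \ Sfin) × (↥Sfin → Fin d))) =
      P.ncard * (P.ncard - 1) + (Z.card - P.ncard) * d ^ P.ncard := by
    rw [Fintype.card_sum, Fintype.card_prod, Fintype.card_coe, Fintype.card_coe,
      Fintype.card_fun, Fintype.card_coe, Fintype.card_fin, hncard,
      Finset.offDiag_card, Finset.card_sdiff_of_subset hsub]
    have : Sfin.card * (Sfin.card - 1) = Sfin.card * Sfin.card - Sfin.card := by
      rw [Nat.mul_sub, Nat.mul_one]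
    rw [this]
  obtain e := Fintype.equivFinOfCardEq hcard
  -- the pieces
  set F : ((↥Sfin.offDiag) ⊕ (↥(Z \ Sfin) × (↥Sfin → Fin d))) → Set (Matrix (Fin h) (Fin d) ℝ) := fun i =>
    Sum.elim
      (fun p : ↥Sfin.offDiag =>
        {l | ParetoDom (lᵀ.mulVec p.1.1) (lᵀ.mulVec p.1.2)})
      (fun q : ↥(Z \ Sfin) × (↥Sfin → Fin d) =>
        {l | ∀ x : ↥Sfin, (lᵀ.mulVec (x : Fin h → ℝ)) (q.2 x) <
              (lᵀ.mulVec (q.1 : Fin h → ℝ)) (q.2 x) ∨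
            lᵀ.mulVec (q.1 : Fin h → ℝ) = lᵀ.mulVec (x : Fin h → ℝ)}) i
    with hF
  refine ⟨F ∘ e.symm, ?_, ?_⟩
  · intro i
    simp only [Function.comp_apply, hF]
    rcases e.symm i with p | q
    · exact convex_domSet _ _
    · exact convex_ESet _ _ _
  · have hunion : (⋃ i, (F ∘ e.symm) i) = ⋃ j, F j := by
      simp only [Function.comp]
      exact Function.Surjective.iUnion_comp e.symm.surjective F
    rw [hunion]
    ext l
    simp only [Set.mem_iUnion, Set.mem_setOf_eq]
    constructor
    · rintro ⟨j, hj⟩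
      rcases j with ⟨⟨z, x⟩, hzx⟩ | ⟨⟨z, hzm⟩, f⟩
      · obtain ⟨hzS, hxS, hne⟩ := Finset.mem_offDiag.mp hzx
        intro heq
        have hzP : z ∈ P := (Finset.mem_filter.mp hzS).2
        have hzl : z ∈ paretoSet (↑Z) l := heq ▸ hzP
        exact hzl.2 ⟨x, Finset.mem_coe.mpr (hsub hxS),
          fun hc => hne hc.symm, hj⟩
      · obtain ⟨hzZ, hzS⟩ := Finset.mem_sdiff.mp hzm
        intro heq
        have hzP : z ∉ P := fun hc =>
          hzS (Finset.mem_filter.mpr ⟨hzZ, hc⟩)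
        have hzl : z ∉ paretoSet (↑Z) l := heq ▸ hzP
        obtain ⟨x, hxl, hdx⟩ := exists_maximal_dominator Z l hzZ hzl
        have hxP : x ∈ P := heq ▸ hxl
        have hxS : x ∈ Sfin := Finset.mem_filter.mpr ⟨Finset.mem_coe.mp hxP.1, hxP⟩
        rcases hj ⟨x, hxS⟩ with hlt | heq2
        · exact absurd (hdx.1 (f ⟨x, hxS⟩)) (not_le.mpr hlt)
        · exact paretoDom_ne hdx heq2
    · intro hl
      -- coverB : any z ∈ Z that is in S*(l) but not in P gives a piece
      have coverB : ∀ z, z ∈ Z → z ∉ P → z ∈ paretoSet (↑Z) l → ∃ j, l ∈ F j := by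
        intro z hzZ hzP hzl
        have hzm : z ∈ Z \ Sfin := Finset.mem_sdiff.mpr
          ⟨hzZ, fun hc => hzP (Finset.mem_filter.mp hc).2⟩
        have hchoice : ∀ x : ↥Sfin, ∃ c : Fin d,
            (lᵀ.mulVec (x : Fin h → ℝ)) c < (lᵀ.mulVec z) c ∨
              lᵀ.mulVec z = lᵀ.mulVec (x : Fin h → ℝ) := by
          intro x
          have hxP : (x : Fin h → ℝ) ∈ P := (Finset.mem_filter.mp x.2).2
          have hxZ : (x : Fin h → ℝ) ∈ (↑Z : Set (Fin h → ℝ)) := hxP.1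
          have hne : (x : Fin h → ℝ) ≠ z := fun hc => hzP (hc ▸ hxP)
          have hnd : ¬ ParetoDom (lᵀ.mulVec z) (lᵀ.mulVec (x : Fin h → ℝ)) :=
            fun hc => hzl.2 ⟨x, hxZ, hne, hc⟩
          rw [ParetoDom] at hnd
          push_neg at hnd
          by_cases hA : ∀ c, (lᵀ.mulVec z) c ≤ (lᵀ.mulVec (x : Fin h → ℝ)) c
          · have hall := hnd hA
            have heqv : lᵀ.mulVec z = lᵀ.mulVec (x : Fin h → ℝ) :=
              funext fun c => le_antisymm (hA c) (hall c)
            exact ⟨⟨0, hd⟩, Or.inr heqv⟩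
          · push_neg at hA
            obtain ⟨c, hc⟩ := hA
            exact ⟨c, Or.inl hc⟩
        choose f hf using hchoice
        exact ⟨Sum.inr ⟨⟨z, hzm⟩, f⟩, fun x => hf x⟩
      by_cases hc1 : ∃ z ∈ P, z ∉ paretoSet (↑Z) l
      · obtain ⟨z, hzP, hzl⟩ := hc1
        have hzZ : z ∈ Z := Finset.mem_coe.mp hzP.1
        obtain ⟨x, hxl, hdx⟩ := exists_maximal_dominator Z l hzZ hzl
        by_cases hxP : x ∈ P
        · have hzS : z ∈ Sfin := Finset.mem_filter.mpr ⟨hzZ, hzP⟩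
          have hxS : x ∈ Sfin := Finset.mem_filter.mpr
            ⟨Finset.mem_coe.mp hxP.1, hxP⟩
          have hne : z ≠ x := fun hc => paretoDom_irrefl _ (hc ▸ hdx)
          exact ⟨Sum.inl ⟨(z, x), Finset.mem_offDiag.mpr ⟨hzS, hxS, hne⟩⟩, hdx⟩
        · exact coverB x (Finset.mem_coe.mp hxl.1) hxP hxl
      · push_neg at hc1
        by_cases hc2 : ∃ z ∈ paretoSet (↑Z) l, z ∉ P
        · obtain ⟨z, hzl, hzP⟩ := hc2
          exact coverB z (Finset.mem_coe.mp hzl.1) hzP hzl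
        · push_neg at hc2
          exact absurd (Set.Subset.antisymm hc2 hc1) hl
end

section
/- Let ξ > 0, let A ∈ ℝ^{t×h} (rows a₁,…,a_t ∈ ℝ^h), H ∈ ℝ^{t×d} (rows ε₁,…,ε_t ∈ ℝ^d), θ ∈ ℝ^{h×d}, and let Σ be a d×d positive definite matrix. Define V := AᵀA, X := Aθ + H ∈ ℝ^{t×d}, the ridge estimator θ̂ := (V + ξI_h)⁻¹ AᵀX, and S := vec(Aᵀ H) ∈ ℝ^{hd} (equivalently S = ∑_{s=1}^t vec(a_s ε_sᵀ)). Then ‖vec(θ̂ − θ)‖_{Σ⁻¹ ⊗ (V+ξI_h)} ≤ ξ · ‖vec(θ)‖_{Σ⁻¹ ⊗ (V+ξI_h)⁻¹} + ‖S‖_{Σ⁻¹ ⊗ (V+ξI_h)⁻¹}. -/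
/-!
Since `AᵀA = W - ξ • 1`, the estimation error splits as `θ̂ - θ = W⁻¹(AᵀH) - ξ • W⁻¹θ`.
Because `(P ⊗ Q) vec M = vec (Q M Pᵀ)`, the `Σ⁻¹ ⊗ W`-norm of `vec (W⁻¹ M)` is the
`Σ⁻¹ ⊗ W⁻¹`-norm of `vec M`, so the triangle inequality for the seminorm of the positive
semidefinite matrix `Σ⁻¹ ⊗ W` gives the bound.
-/

open Matrix Kronecker

/-- Column-stacking vectorization of an `h × d` real matrix, indexed by
`(column, row)` in column-major order. -/
def vecCol {h d : ℕ} (M : Matrix (Fin h) (Fin d) ℝ) : Fin d × Fin h → ℝ :=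
  fun p => M p.2 p.1

section QuadraticNorm

variable {n : Type*} [Fintype n]

theorem Matrix.PosSemidef.sqrt_dotProduct_mulVec_sub_le {M : Matrix n n ℝ} (hM : M.PosSemidef)
    (x y : n → ℝ) :
    √((x - y) ⬝ᵥ M *ᵥ (x - y)) ≤ √(x ⬝ᵥ M *ᵥ x) + √(y ⬝ᵥ M *ᵥ y) := by
  -- `‖z‖` would elaborate to the sup norm of `n → ℝ`, so the seminorm of `M` is named.
  let E := M.toSeminormedAddCommGroup hM
  have hnorm (z : n → ℝ) : √(z ⬝ᵥ M *ᵥ z) = E.norm z := by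
    rw [dotProduct_comm]; rfl
  simpa only [hnorm] using @norm_sub_le _ E.toSeminormedAddGroup x y

theorem Matrix.sqrt_smul_dotProduct_mulVec_smul (M : Matrix n n ℝ) (c : ℝ) (x : n → ℝ) :
    √((c • x) ⬝ᵥ M *ᵥ (c • x)) = |c| * √(x ⬝ᵥ M *ᵥ x) := by
  rw [mulVec_smul, smul_dotProduct, dotProduct_smul, smul_eq_mul, smul_eq_mul, ← mul_assoc,
    Real.sqrt_mul (mul_self_nonneg c), Real.sqrt_mul_self_eq_abs]

end QuadraticNorm

section Vectorization

variable {h d : ℕ}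

theorem vecCol_sub (M N : Matrix (Fin h) (Fin d) ℝ) : vecCol (M - N) = vecCol M - vecCol N := rfl

theorem vecCol_smul (c : ℝ) (M : Matrix (Fin h) (Fin d) ℝ) : vecCol (c • M) = c • vecCol M := rfl

theorem kronecker_mulVec_vecCol (P : Matrix (Fin d) (Fin d) ℝ) (Q : Matrix (Fin h) (Fin h) ℝ)
    (M : Matrix (Fin h) (Fin d) ℝ) : (P ⊗ₖ Q) *ᵥ vecCol M = vecCol (Q * M * Pᵀ) := by
  ext ⟨j, i⟩
  simp only [mulVec, dotProduct, vecCol, kroneckerMap_apply, mul_apply, Fintype.sum_prod_type,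
    transpose_apply, Finset.sum_mul]
  exact Finset.sum_congr rfl fun l _ => Finset.sum_congr rfl fun k _ => by ring

theorem vecCol_dotProduct_vecCol (M N : Matrix (Fin h) (Fin d) ℝ) :
    vecCol M ⬝ᵥ vecCol N = (Mᵀ * N).trace := by
  simp only [dotProduct, vecCol, trace, diag, mul_apply, transpose_apply, Fintype.sum_prod_type]

theorem vecCol_inv_mul_dotProduct_kronecker_mulVec (P : Matrix (Fin d) (Fin d) ℝ)
    {W : Matrix (Fin h) (Fin h) ℝ} (hW : W.IsSymm) (hWdet : IsUnit W.det)
    (M : Matrix (Fin h) (Fin d) ℝ) :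
    vecCol (W⁻¹ * M) ⬝ᵥ (P ⊗ₖ W) *ᵥ vecCol (W⁻¹ * M) = vecCol M ⬝ᵥ (P ⊗ₖ W⁻¹) *ᵥ vecCol M := by
  rw [kronecker_mulVec_vecCol, kronecker_mulVec_vecCol, ← Matrix.mul_assoc W,
    mul_nonsing_inv _ hWdet, Matrix.one_mul, vecCol_dotProduct_vecCol, vecCol_dotProduct_vecCol,
    transpose_mul, hW.inv.eq, Matrix.mul_assoc, Matrix.mul_assoc]

end Vectorization

section Ridge

variable {t h d : ℕ}

theorem posDef_transpose_mul_self_add_smul_one (A : Matrix (Fin t) (Fin h) ℝ) {ξ : ℝ}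
    (hξ : 0 < ξ) : (Aᵀ * A + ξ • (1 : Matrix (Fin h) (Fin h) ℝ)).PosDef :=
  PosDef.posSemidef_add (posSemidef_conjTranspose_mul_self A) (PosDef.one.smul hξ)

theorem ridge_sub_eq (A : Matrix (Fin t) (Fin h) ℝ) (H : Matrix (Fin t) (Fin d) ℝ)
    (θ : Matrix (Fin h) (Fin d) ℝ) {ξ : ℝ} {W : Matrix (Fin h) (Fin h) ℝ}
    (hWA : W = Aᵀ * A + ξ • 1) (hW : IsUnit W.det) :
    W⁻¹ * (Aᵀ * (A * θ + H)) - θ = W⁻¹ * (Aᵀ * H) - ξ • (W⁻¹ * θ) := by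
  have hAA : Aᵀ * A = W - ξ • 1 := by rw [hWA, add_sub_cancel_right]
  calc W⁻¹ * (Aᵀ * (A * θ + H)) - θ = W⁻¹ * ((W - ξ • 1) * θ + Aᵀ * H) - θ := by
        rw [← hAA, Matrix.mul_add, Matrix.mul_assoc]
    _ = W⁻¹ * W * θ - ξ • (W⁻¹ * θ) + W⁻¹ * (Aᵀ * H) - θ := by
        rw [Matrix.sub_mul, Matrix.smul_mul, Matrix.one_mul, Matrix.mul_add, Matrix.mul_sub,
          Matrix.mul_smul, Matrix.mul_assoc]
    _ = W⁻¹ * (Aᵀ * H) - ξ • (W⁻¹ * θ) := by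
        rw [nonsing_inv_mul _ hW, Matrix.one_mul]; abel

end Ridge

/-- Self-normalized bound for the ridge estimator:
`‖vec(θ̂ − θ)‖_{Σ⁻¹⊗(V+ξI)} ≤ ξ‖vec(θ)‖_{Σ⁻¹⊗(V+ξI)⁻¹} + ‖S‖_{Σ⁻¹⊗(V+ξI)⁻¹}`
where `V = AᵀA`, `X = Aθ + H`, `θ̂ = (V+ξI)⁻¹AᵀX`, `S = vec(AᵀH)`. -/
theorem ridge_self_normalized_bound (t h d : ℕ)
    (ξ : ℝ) (hξ : 0 < ξ)
    (A : Matrix (Fin t) (Fin h) ℝ) (H : Matrix (Fin t) (Fin d) ℝ)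
    (θ : Matrix (Fin h) (Fin d) ℝ)
    (S : Matrix (Fin d) (Fin d) ℝ) (hS : S.PosDef) :
    let V : Matrix (Fin h) (Fin h) ℝ := Aᵀ * A
    let W : Matrix (Fin h) (Fin h) ℝ := V + ξ • (1 : Matrix (Fin h) (Fin h) ℝ)
    let X : Matrix (Fin t) (Fin d) ℝ := A * θ + H
    let θhat : Matrix (Fin h) (Fin d) ℝ := W⁻¹ * (Aᵀ * X)
    let Svec : Fin d × Fin h → ℝ := vecCol (Aᵀ * H)
    Real.sqrt (vecCol (θhat - θ) ⬝ᵥ (S⁻¹ ⊗ₖ W).mulVec (vecCol (θhat - θ)))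
      ≤ ξ * Real.sqrt (vecCol θ ⬝ᵥ (S⁻¹ ⊗ₖ W⁻¹).mulVec (vecCol θ))
        + Real.sqrt (Svec ⬝ᵥ (S⁻¹ ⊗ₖ W⁻¹).mulVec Svec) := by
  intro V W X θhat Svec
  have hW : W.PosDef := posDef_transpose_mul_self_add_smul_one A hξ
  have hWdet : IsUnit W.det := hW.det_pos.ne'.isUnit
  have hWsymm : W.IsSymm := hW.isHermitian
  have hPSD : (S⁻¹ ⊗ₖ W).PosSemidef := (hS.inv.kronecker hW).posSemidef
  have hsub : θhat - θ = W⁻¹ * (Aᵀ * H) - ξ • (W⁻¹ * θ) := ridge_sub_eq A H θ rfl hWdet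
  rw [hsub, vecCol_sub, vecCol_smul, add_comm]
  refine (hPSD.sqrt_dotProduct_mulVec_sub_le _ _).trans_eq ?_
  rw [sqrt_smul_dotProduct_mulVec_smul, abs_of_pos hξ,
    vecCol_inv_mul_dotProduct_kronecker_mulVec _ hWsymm hWdet,
    vecCol_inv_mul_dotProduct_kronecker_mulVec _ hWsymm hWdet]
end

section
/- Let Σ be a d×d positive definite matrix, V an h×h positive definite matrix, a ∈ ℝ^h, and z ∈ ℝ^{dh}. Then ‖z‖_{Σ⁻¹ ⊗ (a aᵀ)} ≤ ‖a‖_{V⁻¹} · ‖z‖_{Σ⁻¹ ⊗ V}, i.e. √( zᵀ(Σ⁻¹ ⊗ a aᵀ)z ) ≤ √(aᵀV⁻¹a) · √( zᵀ(Σ⁻¹ ⊗ V)z ). -/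
/-!
Cauchy–Schwarz for the inner product `⟪x, y⟫ = xᵀ V y`, applied to `V⁻¹ a` and `x`, gives
`(aᵀx)² ≤ (aᵀV⁻¹a)(xᵀVx)`, i.e. `a aᵀ ≤ (aᵀV⁻¹a) • V` in the Loewner order. Taking the Kronecker
product with the positive semidefinite `Σ⁻¹` preserves this order, and evaluating both sides
at `z` and taking square roots gives the claim.
-/

open Matrix Kronecker

open scoped MatrixOrder

namespace Matrix

theorem kronecker_le_kronecker_left {𝕜 m n : Type*} [RCLike 𝕜] [Finite m] [Finite n]
    {A : Matrix m m 𝕜} {B C : Matrix n n 𝕜} (hA : 0 ≤ A) (hBC : B ≤ C) :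
    A ⊗ₖ B ≤ A ⊗ₖ C := by
  have hsub : A ⊗ₖ C - A ⊗ₖ B = A ⊗ₖ (C - B) := by
    rw [sub_eq_iff_eq_add', ← kronecker_add, add_sub_cancel]
  rw [le_iff, hsub]
  exact hA.posSemidef.kronecker (le_iff.mp hBC)

variable {n : Type*} [Fintype n]

theorem dotProduct_mulVec_le_of_le {A B : Matrix n n ℝ} (hAB : A ≤ B) (x : n → ℝ) :
    x ⬝ᵥ A *ᵥ x ≤ x ⬝ᵥ B *ᵥ x := by
  have := (le_iff.mp hAB).dotProduct_mulVec_nonneg x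
  rwa [star_trivial, sub_mulVec, dotProduct_sub, sub_nonneg] at this

theorem dotProduct_vecMulVec_self_mulVec (a x : n → ℝ) :
    x ⬝ᵥ vecMulVec a a *ᵥ x = (a ⬝ᵥ x) ^ 2 := by
  rw [vecMulVec_mulVec, dotProduct_smul, op_smul_eq_mul, dotProduct_comm, sq]

theorem PosDef.sq_dotProduct_le [DecidableEq n] {V : Matrix n n ℝ} (hV : V.PosDef) (a x : n → ℝ) :
    (a ⬝ᵥ x) ^ 2 ≤ (a ⬝ᵥ V⁻¹ *ᵥ a) * (x ⬝ᵥ V *ᵥ x) := by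
  let _ := V.toSeminormedAddCommGroup hV.posSemidef
  let _ := V.toInnerProductSpace hV.posSemidef
  have hcs := real_inner_mul_inner_self_le (V⁻¹ *ᵥ a) x
  -- the inner product induced by `V` unfolds to `⟪u, v⟫ = (V *ᵥ v) ⬝ᵥ u`
  change (V *ᵥ x) ⬝ᵥ V⁻¹ *ᵥ a * ((V *ᵥ x) ⬝ᵥ V⁻¹ *ᵥ a)
      ≤ (V *ᵥ V⁻¹ *ᵥ a) ⬝ᵥ V⁻¹ *ᵥ a * ((V *ᵥ x) ⬝ᵥ x) at hcs
  have hdet : IsUnit V.det := hV.det_pos.ne'.isUnit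
  have hVt : Vᵀ = V := (conjTranspose_eq_transpose_of_trivial V).symm.trans hV.isHermitian
  have hVVinv : V *ᵥ V⁻¹ *ᵥ a = a := by
    rw [mulVec_mulVec, mul_nonsing_inv V hdet, one_mulVec]
  have hx : (V *ᵥ x) ⬝ᵥ V⁻¹ *ᵥ a = a ⬝ᵥ x := by
    rw [dotProduct_mulVec, ← vecMul_transpose, hVt, vecMul_vecMul, mul_nonsing_inv V hdet,
      vecMul_one, dotProduct_comm]
  rwa [hx, hVVinv, dotProduct_comm (V *ᵥ x), ← sq] at hcs

theorem PosDef.vecMulVec_self_le_smul [DecidableEq n] {V : Matrix n n ℝ} (hV : V.PosDef)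
    (a : n → ℝ) : vecMulVec a a ≤ (a ⬝ᵥ V⁻¹ *ᵥ a) • V := by
  refine le_iff.mpr <| PosSemidef.of_dotProduct_mulVec_nonneg ?_ fun x => ?_
  · have hvv : (vecMulVec a a).IsHermitian := by
      simpa using (posSemidef_vecMulVec_self_star a).isHermitian
    exact (hV.isHermitian.smul (.all _)).sub hvv
  · rw [star_trivial, sub_mulVec, dotProduct_sub, smul_mulVec, dotProduct_smul, smul_eq_mul,
      dotProduct_vecMulVec_self_mulVec, sub_nonneg]
    exact hV.sq_dotProduct_le a x

end Matrix

/-- `‖z‖_{Σ⁻¹ ⊗ aaᵀ} ≤ ‖a‖_{V⁻¹} · ‖z‖_{Σ⁻¹ ⊗ V}` for `Σ` and `V` positive definite. -/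
theorem kronecker_seminorm_le (d h : ℕ)
    (S : Matrix (Fin d) (Fin d) ℝ) (hS : S.PosDef)
    (V : Matrix (Fin h) (Fin h) ℝ) (hV : V.PosDef)
    (a : Fin h → ℝ) (z : Fin d × Fin h → ℝ) :
    Real.sqrt (z ⬝ᵥ (S⁻¹ ⊗ₖ Matrix.vecMulVec a a).mulVec z)
      ≤ Real.sqrt (a ⬝ᵥ V⁻¹.mulVec a) * Real.sqrt (z ⬝ᵥ (S⁻¹ ⊗ₖ V).mulVec z) := by
  have hc : 0 ≤ a ⬝ᵥ V⁻¹ *ᵥ a := by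
    simpa using hV.inv.posSemidef.dotProduct_mulVec_nonneg a
  have hle : S⁻¹ ⊗ₖ vecMulVec a a ≤ (a ⬝ᵥ V⁻¹ *ᵥ a) • (S⁻¹ ⊗ₖ V) := by
    rw [← kronecker_smul]
    exact kronecker_le_kronecker_left hS.inv.posSemidef.nonneg (hV.vecMulVec_self_le_smul a)
  rw [← Real.sqrt_mul hc]
  refine Real.sqrt_le_sqrt ?_
  simpa only [smul_mulVec, dotProduct_smul, smul_eq_mul] using dotProduct_mulVec_le_of_le hle z
end
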